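/- Let 0 < p < ∞ and 0 < q < ∞. Suppose (v_j)_{j≥1} is a sequence of elements of ℓ_{p,q} with pairwise disjoint supports and ‖v_j‖_{p,q} ≥ α for some α > 0. Then ‖∑_{j=1}^k v_j‖_{p,q} → ∞ as k → ∞. -/

import Mathlib

/-!
Write `d_u(t) = #{i | t < |u i|}` and `W(ν) = ∑_{n<ν} (n+1)^(q/p-1)`. Since `t < u*(n)` iff
`n < d_u(t)`, the layer-cake formula gives `‖u‖_{p,q}^q = q ∫_0^∞ W(d_u(t)) t^(q-1) dt`.
Disjoint supports make `d` additive, `d_{∑ v_j} = ∑ d_{v_j}`. With `s = min 1 (q/p)`, the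
function `W` is superadditive when `q ≥ p` and comparable to `ν^(q/p)` when `q < p`, so by the
power-mean inequality `W(ν_1 + ⋯ + ν_k) ≥ s k^(s-1) ∑ W(ν_j)`. Integrating,
`‖∑_{j<k} v_j‖^q ≥ s k^(s-1) ∑ ‖v_j‖^q ≥ s α^q k^s → ∞`.
-/

open Filter MeasureTheory Set
open scoped ENNReal NNReal Topology

/-- Non-increasing rearrangement of a sequence (0-indexed: `rearr u j` is the
`(j+1)`-th largest value of `|u|`). -/
noncomputable def rearr (u : ℕ → ℝ) (j : ℕ) : ℝ :=
  sInf {t : ℝ | 0 ≤ t ∧ Set.encard {i : ℕ | t < |u i|} ≤ (j : ℕ∞)}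

/-- Lorentz sequence quasi-norm `‖u‖_{p,q}` for `q < ∞`. -/
noncomputable def lorentzNorm (p q : ℝ) (u : ℕ → ℝ) : ℝ≥0∞ :=
  (∑' j : ℕ, ENNReal.ofReal (((j : ℝ) + 1) ^ (q / p - 1) * rearr u j ^ q)) ^ (1 / q)

/-- Lorentz sequence quasi-norm `‖u‖_{p,∞}`. -/
noncomputable def lorentzNormInf (p : ℝ) (u : ℕ → ℝ) : ℝ≥0∞ :=
  ⨆ j : ℕ, ENNReal.ofReal (((j : ℝ) + 1) ^ (1 / p) * rearr u j)

/-- Lorentz sequence quasi-norm with extended second index. -/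
noncomputable def lorentzNormE (p : ℝ) (q : ℝ≥0∞) (u : ℕ → ℝ) : ℝ≥0∞ :=
  if q = ⊤ then lorentzNormInf p u else lorentzNorm p q.toReal u

open Function

noncomputable def distribFn (u : ℕ → ℝ) (t : ℝ) : ℕ∞ := {i | t < |u i|}.encard

section Rearrangement

variable {u : ℕ → ℝ}

lemma distribFn_antitone (u : ℕ → ℝ) : Antitone (distribFn u) :=
  fun _ _ hts => Set.encard_le_encard fun _ hi => lt_of_le_of_lt hts hi

lemma exists_lt_lt_distribFn {t : ℝ} {n : ℕ} (h : (n : ℕ∞) < distribFn u t) :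
    ∃ s, t < s ∧ (n : ℕ∞) < distribFn u s := by
  obtain ⟨T, hTsub, hTcard⟩ := Set.exists_subset_encard_eq (Order.add_one_le_of_lt h)
  have hT : T.Finite := Set.finite_of_encard_eq_coe hTcard
  have hnear : ∀ᶠ s in 𝓝[>] t, ∀ i ∈ hT.toFinset, s < |u i| :=
    nhdsWithin_le_nhds <| (Filter.eventually_all_finset _).2 fun i hi =>
      eventually_lt_nhds (hTsub (hT.mem_toFinset.1 hi))
  obtain ⟨s, hs, hts⟩ := (hnear.and self_mem_nhdsWithin).exists
  have hn : (n : ℕ∞) < n + 1 := by exact_mod_cast n.lt_succ_self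
  refine ⟨s, hts, hn.trans_le ?_⟩
  rw [← hTcard]
  exact Set.encard_le_encard fun i hi => hs i (hT.mem_toFinset.2 hi)

lemma bddAbove_of_distribFn_ne_top {t : ℝ} (h : distribFn u t ≠ ⊤) :
    BddAbove (range fun i => |u i|) := by
  have hfin : {i | t < |u i|}.Finite := Set.encard_ne_top_iff.1 h
  refine (bddAbove_Iic (a := t)).union (hfin.image fun i => |u i|).bddAbove |>.mono ?_
  rintro _ ⟨i, rfl⟩
  by_cases hi : t < |u i|
  · exact Or.inr ⟨i, hi, rfl⟩
  · exact Or.inl (not_lt.1 hi)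

-- The junk value `sInf ∅ = 0`: all superlevel sets of an unbounded sequence are infinite.
lemma rearr_eq_zero_of_not_bddAbove (hu : ¬BddAbove (range fun i => |u i|)) (n : ℕ) :
    rearr u n = 0 := by
  unfold rearr
  convert Real.sInf_empty
  refine Set.eq_empty_of_forall_notMem fun t ht => hu (bddAbove_of_distribFn_ne_top (t := t) ?_)
  exact ne_top_of_le_ne_top (by simp) ht.2

lemma rearr_nonneg (u : ℕ → ℝ) (n : ℕ) : 0 ≤ rearr u n :=
  Real.sInf_nonneg fun _ ht => ht.1

lemma lt_rearr_iff (hu : BddAbove (range fun i => |u i|)) {t : ℝ} (ht : 0 ≤ t) {n : ℕ} :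
    t < rearr u n ↔ (n : ℕ∞) < distribFn u t := by
  constructor
  · intro h
    by_contra! hd
    exact h.not_ge (csInf_le ⟨0, fun _ hx => hx.1⟩ ⟨ht, hd⟩)
  · intro h
    obtain ⟨M, hM⟩ := hu
    obtain ⟨s, hts, hs⟩ := exists_lt_lt_distribFn h
    refine hts.trans_le (le_csInf ⟨max M 0, le_max_right _ _, ?_⟩ fun x hx => ?_)
    · refine (Set.encard_eq_zero.2 <| Set.eq_empty_of_forall_notMem fun i hi => ?_).trans_le
        zero_le
      exact hi.not_ge ((hM ⟨i, rfl⟩).trans (le_max_left _ _))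
    · by_contra! hxs
      exact (hx.2.trans_lt hs).not_ge (distribFn_antitone u hxs.le)

end Rearrangement

lemma distribFn_finset_sum {ι : Type*} {v : ι → ℕ → ℝ}
    (hdisj : Pairwise (Disjoint on fun j => support (v j))) (J : Finset ι) {t : ℝ}
    (ht : 0 ≤ t) : distribFn (fun i => ∑ j ∈ J, v j i) t = ∑ j ∈ J, distribFn (v j) t := by
  induction J using Finset.cons_induction with
  | empty => simp [distribFn, ht.not_gt]
  | cons a J ha ih =>
    have hsplit : ∀ i, v a i = 0 ∨ ∑ j ∈ J, v j i = 0 := fun i => or_iff_not_imp_left.2 fun hi =>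
      Finset.sum_eq_zero fun j hj => notMem_support.1 fun hj' =>
        Set.disjoint_left.1 (hdisj (ne_of_mem_of_not_mem hj ha).symm) hi hj'
    have hunion : {i | t < |∑ j ∈ Finset.cons a J ha, v j i|} =
        {i | t < |v a i|} ∪ {i | t < |∑ j ∈ J, v j i|} := by
      ext i
      rcases hsplit i with h | h <;> simp [h, ht.not_gt]
    have hdisj' : Disjoint {i | t < |v a i|} {i | t < |∑ j ∈ J, v j i|} := by
      refine Set.disjoint_left.2 fun i h₁ h₂ => ?_
      rcases hsplit i with h | h <;> simp_all [ht.not_gt]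
    rw [Finset.sum_cons, ← ih, distribFn, hunion, Set.encard_union_eq hdisj']
    rfl

lemma bddAbove_abs_finset_sum {ι : Type*} {v : ι → ℕ → ℝ} (J : Finset ι)
    (hv : ∀ j, BddAbove (range fun i => |v j i|)) :
    BddAbove (range fun i => |∑ j ∈ J, v j i|) := by
  choose M hM using hv
  refine ⟨∑ j ∈ J, M j, ?_⟩
  rintro _ ⟨i, rfl⟩
  exact (Finset.abs_sum_le_sum_abs _ _).trans (Finset.sum_le_sum fun j _ => hM j ⟨i, rfl⟩)

-- Bernoulli's inequality for `(1 - 1/(x+1)) ^ a`, multiplied by `(x+1) ^ a`.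
lemma mul_rpow_sub_one_le_rpow_sub_rpow {a x : ℝ} (ha₀ : 0 ≤ a) (ha₁ : a ≤ 1) (hx : 0 ≤ x) :
    a * (x + 1) ^ (a - 1) ≤ (x + 1) ^ a - x ^ a := by
  have hx₁ : 0 < x + 1 := by linarith
  have hbern := rpow_one_add_le_one_add_mul_self (s := -(x + 1)⁻¹)
    (by rw [neg_le_neg_iff]; exact inv_le_one_of_one_le₀ (by linarith)) ha₀ ha₁
  have hbase : 1 + -(x + 1)⁻¹ = x * (x + 1)⁻¹ := by field_simp; ring
  rw [hbase, Real.mul_rpow hx (inv_nonneg.2 hx₁.le), Real.inv_rpow hx₁.le,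
    mul_inv_le_iff₀ (Real.rpow_pos_of_pos hx₁ a)] at hbern
  have : (1 + a * -(x + 1)⁻¹) * (x + 1) ^ a = (x + 1) ^ a - a * ((x + 1) ^ a / (x + 1)) := by ring
  rw [Real.rpow_sub_one hx₁.ne']
  linarith

lemma mul_sum_range_rpow_le {a : ℝ} (ha₀ : 0 < a) (ha₁ : a ≤ 1) (m : ℕ) :
    a * ∑ n ∈ Finset.range m, ((n : ℝ) + 1) ^ (a - 1) ≤ (m : ℝ) ^ a := by
  have htel := Finset.sum_range_sub (fun n : ℕ => (n : ℝ) ^ a) m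
  simp only [Nat.cast_zero, Real.zero_rpow ha₀.ne', sub_zero, Nat.cast_succ] at htel
  rw [Finset.mul_sum, ← htel]
  exact Finset.sum_le_sum fun n _ => mul_rpow_sub_one_le_rpow_sub_rpow ha₀.le ha₁ n.cast_nonneg

lemma rpow_le_sum_range_rpow {a : ℝ} (ha₀ : 0 < a) (ha₁ : a ≤ 1) (m : ℕ) :
    (m : ℝ) ^ a ≤ ∑ n ∈ Finset.range m, ((n : ℝ) + 1) ^ (a - 1) := by
  rcases m.eq_zero_or_pos with rfl | hm
  · simp [Real.zero_rpow ha₀.ne']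
  calc (m : ℝ) ^ a = ∑ _n ∈ Finset.range m, (m : ℝ) ^ (a - 1) := by
        rw [Finset.sum_const, Finset.card_range, nsmul_eq_mul, Real.rpow_sub_one (by positivity)]
        field_simp
    _ ≤ _ := Finset.sum_le_sum fun n hn => Real.rpow_le_rpow_of_nonpos (by positivity)
        (by exact_mod_cast Finset.mem_range.1 hn) (by linarith)

lemma ENNReal.card_rpow_mul_sum_rpow_le {ι : Type*} (s : Finset ι) (x : ι → ℝ≥0∞)
    {a : ℝ} (ha₀ : 0 < a) (ha₁ : a ≤ 1) :
    (s.card : ℝ≥0∞) ^ (a - 1) * ∑ i ∈ s, x i ^ a ≤ (∑ i ∈ s, x i) ^ a := by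
  rcases s.eq_empty_or_nonempty with rfl | hs
  · simp
  have hk₀ : (s.card : ℝ≥0∞) ≠ 0 := by simpa using hs.ne_empty
  have hk : (s.card : ℝ≥0∞) ^ (a - 1) * (s.card : ℝ≥0∞) ^ (1 - a) = 1 := by
    rw [← ENNReal.rpow_add _ _ hk₀ (ENNReal.natCast_ne_top _)]
    simp
  have hmean := ENNReal.rpow_sum_le_const_mul_sum_rpow s (fun i => x i ^ a)
    (one_le_inv₀ ha₀ |>.2 ha₁)
  simp only [ENNReal.rpow_rpow_inv ha₀.ne'] at hmean
  rw [ENNReal.rpow_inv_le_iff ha₀, ENNReal.mul_rpow_of_nonneg _ _ ha₀.le, ← ENNReal.rpow_mul,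
    sub_mul, inv_mul_cancel₀ ha₀.ne', one_mul] at hmean
  calc (s.card : ℝ≥0∞) ^ (a - 1) * ∑ i ∈ s, x i ^ a
      ≤ (s.card : ℝ≥0∞) ^ (a - 1) * ((s.card : ℝ≥0∞) ^ (1 - a) * (∑ i ∈ s, x i) ^ a) := by
        gcongr
    _ = (∑ i ∈ s, x i) ^ a := by rw [← mul_assoc, hk, one_mul]

lemma ENNReal.natCast_rpow_eq_ofReal (m : ℕ) {a : ℝ} (ha : 0 ≤ a) :
    (m : ℝ≥0∞) ^ a = ENNReal.ofReal ((m : ℝ) ^ a) := by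
  rw [← ENNReal.ofReal_rpow_of_nonneg m.cast_nonneg ha, ENNReal.ofReal_natCast]

noncomputable def lorentzWeight (a : ℝ) (n : ℕ) : ℝ≥0∞ := ENNReal.ofReal (((n : ℝ) + 1) ^ (a - 1))

-- The header's `W(ν)` is `lorentzMeasure (q / p) {n | (n : ℕ∞) < ν}`.
noncomputable def lorentzMeasure (a : ℝ) : Measure ℕ := Measure.count.withDensity (lorentzWeight a)

section LorentzMeasure

variable {a : ℝ}

lemma lintegral_lorentzMeasure (f : ℕ → ℝ≥0∞) :
    ∫⁻ n, f n ∂lorentzMeasure a = ∑' n, lorentzWeight a n * f n := by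
  rw [lorentzMeasure, lintegral_withDensity_eq_lintegral_mul _ (measurable_of_countable _)
    (measurable_of_countable _), lintegral_count]
  rfl

lemma lorentzMeasure_setOf_lt_coe (m : ℕ) :
    lorentzMeasure a {n | (n : ℕ∞) < m} =
      ENNReal.ofReal (∑ n ∈ Finset.range m, ((n : ℝ) + 1) ^ (a - 1)) := by
  have : {n : ℕ | (n : ℕ∞) < m} = ↑(Finset.range m) := by ext; simp
  rw [this, lorentzMeasure, withDensity_apply _ (Finset.range m).measurableSet, lintegral_finset,
    ENNReal.ofReal_sum_of_nonneg fun n _ => by positivity]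
  simp [lorentzWeight]

lemma lorentzMeasure_univ (ha : 0 ≤ a) : lorentzMeasure a univ = ⊤ := by
  rw [lorentzMeasure, withDensity_apply _ MeasurableSet.univ, Measure.restrict_univ,
    lintegral_count]
  by_contra h
  have hsum : Summable fun n : ℕ => ((n : ℝ) + 1) ^ (a - 1) := by
    convert ENNReal.summable_toReal h using 2 with n
    rw [lorentzWeight, ENNReal.toReal_ofReal (by positivity)]
  linarith [Real.summable_nat_rpow.1 ((summable_nat_add_iff 1).1 (by simpa using hsum))]

lemma rpow_le_lorentzMeasure_setOf_lt (ha₀ : 0 < a) (ha₁ : a ≤ 1) (ν : ℕ∞) :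
    (ν : ℝ≥0∞) ^ a ≤ lorentzMeasure a {n | (n : ℕ∞) < ν} := by
  induction ν using ENat.recTopCoe with
  | top => simp [lorentzMeasure_univ ha₀.le, ENNReal.top_rpow_of_pos ha₀]
  | coe m =>
    rw [ENat.toENNReal_coe, ENNReal.natCast_rpow_eq_ofReal m ha₀.le, lorentzMeasure_setOf_lt_coe]
    exact ENNReal.ofReal_le_ofReal (rpow_le_sum_range_rpow ha₀ ha₁ m)

lemma ofReal_mul_lorentzMeasure_setOf_lt_le (ha₀ : 0 < a) (ha₁ : a ≤ 1) (ν : ℕ∞) :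
    ENNReal.ofReal a * lorentzMeasure a {n | (n : ℕ∞) < ν} ≤ (ν : ℝ≥0∞) ^ a := by
  induction ν using ENat.recTopCoe with
  | top => simp [ENNReal.top_rpow_of_pos ha₀]
  | coe m =>
    rw [ENat.toENNReal_coe, ENNReal.natCast_rpow_eq_ofReal m ha₀.le, lorentzMeasure_setOf_lt_coe,
      ← ENNReal.ofReal_mul ha₀.le]
    exact ENNReal.ofReal_le_ofReal (mul_sum_range_rpow_le ha₀ ha₁ m)

lemma lorentzMeasure_setOf_lt_add_le (ha : 1 ≤ a) (ν₁ ν₂ : ℕ∞) :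
    lorentzMeasure a {n | (n : ℕ∞) < ν₁} + lorentzMeasure a {n | (n : ℕ∞) < ν₂} ≤
      lorentzMeasure a {n | (n : ℕ∞) < ν₁ + ν₂} := by
  induction ν₁ using ENat.recTopCoe with
  | top => simp [lorentzMeasure_univ (zero_le_one.trans ha)]
  | coe m₁ =>
  induction ν₂ using ENat.recTopCoe with
  | top => simp [lorentzMeasure_univ (zero_le_one.trans ha)]
  | coe m₂ =>
    rw [← ENat.natCast_add, lorentzMeasure_setOf_lt_coe, lorentzMeasure_setOf_lt_coe,
      lorentzMeasure_setOf_lt_coe, ← ENNReal.ofReal_add (by positivity) (by positivity),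
      Finset.sum_range_add]
    refine ENNReal.ofReal_le_ofReal (add_le_add le_rfl (Finset.sum_le_sum fun n _ => ?_))
    exact Real.rpow_le_rpow (by positivity) (by simp) (by linarith)

lemma le_lorentzMeasure_setOf_lt_sum {ι : Type*} (ha : 0 < a) (J : Finset ι) (ν : ι → ℕ∞) :
    ENNReal.ofReal (min 1 a) * (J.card : ℝ≥0∞) ^ (min 1 a - 1) *
        ∑ j ∈ J, lorentzMeasure a {n | (n : ℕ∞) < ν j} ≤
      lorentzMeasure a {n | (n : ℕ∞) < ∑ j ∈ J, ν j} := by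
  rcases le_or_gt 1 a with ha₁ | ha₁
  · rw [min_eq_left ha₁, sub_self, ENNReal.rpow_zero, ENNReal.ofReal_one, one_mul, one_mul]
    induction J using Finset.cons_induction with
    | empty => simp
    | cons j J hj ih =>
      rw [Finset.sum_cons, Finset.sum_cons]
      exact (add_le_add le_rfl ih).trans (lorentzMeasure_setOf_lt_add_le ha₁ _ _)
  rw [min_eq_right ha₁.le]
  calc ENNReal.ofReal a * (J.card : ℝ≥0∞) ^ (a - 1) * ∑ j ∈ J, lorentzMeasure a {n | ↑n < ν j}
      = (J.card : ℝ≥0∞) ^ (a - 1) *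
          ∑ j ∈ J, ENNReal.ofReal a * lorentzMeasure a {n | ↑n < ν j} := by
        rw [← Finset.mul_sum]; ring
    _ ≤ (J.card : ℝ≥0∞) ^ (a - 1) * ∑ j ∈ J, (ν j : ℝ≥0∞) ^ a := by
        gcongr with j
        exact ofReal_mul_lorentzMeasure_setOf_lt_le ha ha₁.le _
    _ ≤ (∑ j ∈ J, (ν j : ℝ≥0∞)) ^ a := ENNReal.card_rpow_mul_sum_rpow_le J _ ha ha₁.le
    _ ≤ lorentzMeasure a {n | (n : ℕ∞) < ∑ j ∈ J, ν j} := by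
        convert rpow_le_lorentzMeasure_setOf_lt ha ha₁.le (∑ j ∈ J, ν j)
        exact (map_sum ENat.toENNRealRingHom ν J).symm

end LorentzMeasure

lemma lintegral_rearr_rpow (μ : Measure ℕ) {u : ℕ → ℝ} (hu : BddAbove (range fun i => |u i|))
    {q : ℝ} (hq : 0 < q) :
    ∫⁻ n, ENNReal.ofReal (rearr u n ^ q) ∂μ = ENNReal.ofReal q *
      ∫⁻ t in Ioi 0, μ {n | (n : ℕ∞) < distribFn u t} * ENNReal.ofReal (t ^ (q - 1)) := by
  rw [lintegral_rpow_eq_lintegral_meas_lt_mul μ (ae_of_all _ (rearr_nonneg u))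
    (measurable_of_countable _).aemeasurable hq]
  congr 1
  refine setLIntegral_congr_fun measurableSet_Ioi fun t ht => ?_
  simp_rw [lt_rearr_iff hu (le_of_lt ht)]

lemma lorentzNorm_rpow_eq_lintegral (p : ℝ) {q : ℝ} (hq : 0 < q) (u : ℕ → ℝ) :
    lorentzNorm p q u ^ q = ∫⁻ n, ENNReal.ofReal (rearr u n ^ q) ∂lorentzMeasure (q / p) := by
  rw [lintegral_lorentzMeasure, lorentzNorm, ← ENNReal.rpow_mul, one_div,
    inv_mul_cancel₀ hq.ne', ENNReal.rpow_one]
  exact tsum_congr fun n => ENNReal.ofReal_mul (by positivity)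

lemma bddAbove_of_lorentzNorm_ne_zero {p q : ℝ} (hq : 0 < q) {u : ℕ → ℝ}
    (hu : lorentzNorm p q u ≠ 0) : BddAbove (range fun i => |u i|) := by
  by_contra h
  simp [lorentzNorm, rearr_eq_zero_of_not_bddAbove h, Real.zero_rpow hq.ne', hq] at hu

lemma measurable_lorentzMeasure_distribFn_mul (a q : ℝ) (u : ℕ → ℝ) :
    Measurable fun t =>
      lorentzMeasure a {n | (n : ℕ∞) < distribFn u t} * ENNReal.ofReal (t ^ (q - 1)) := by
  have hW : Monotone fun ν : ℕ∞ => lorentzMeasure a {n | (n : ℕ∞) < ν} :=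
    fun _ _ h => measure_mono fun _ hn => lt_of_lt_of_le hn h
  exact (hW.comp_antitone (distribFn_antitone u)).measurable.mul (by fun_prop)

section DisjointSupports

variable {ι : Type*} {p q : ℝ} {v : ι → ℕ → ℝ}

lemma le_lorentzNorm_rpow_finset_sum (hp : 0 < p) (hq : 0 < q)
    (hdisj : Pairwise (Disjoint on fun j => support (v j)))
    (hv : ∀ j, BddAbove (range fun i => |v j i|)) (J : Finset ι) :
    ENNReal.ofReal (min 1 (q / p)) * (J.card : ℝ≥0∞) ^ (min 1 (q / p) - 1) *
        ∑ j ∈ J, lorentzNorm p q (v j) ^ q ≤ lorentzNorm p q (fun i => ∑ j ∈ J, v j i) ^ q := by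
  set c := ENNReal.ofReal (min 1 (q / p)) * (J.card : ℝ≥0∞) ^ (min 1 (q / p) - 1)
  simp_rw [lorentzNorm_rpow_eq_lintegral p hq, lintegral_rearr_rpow _ (hv _) hq,
    lintegral_rearr_rpow _ (bddAbove_abs_finset_sum J hv) hq, ← Finset.mul_sum,
    ← lintegral_finsetSum _ fun j _ => measurable_lorentzMeasure_distribFn_mul _ q (v j)]
  calc c * (ENNReal.ofReal q * ∫⁻ t in Ioi 0, ∑ j ∈ J,
          lorentzMeasure (q / p) {n | (n : ℕ∞) < distribFn (v j) t} * ENNReal.ofReal (t ^ (q - 1)))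
      ≤ ENNReal.ofReal q * ∫⁻ t in Ioi 0, c * ∑ j ∈ J,
          lorentzMeasure (q / p) {n | (n : ℕ∞) < distribFn (v j) t} *
            ENNReal.ofReal (t ^ (q - 1)) := by
        rw [mul_left_comm]
        gcongr
        exact lintegral_const_mul_le _ _
    _ ≤ _ := by
        gcongr ENNReal.ofReal q * ?_
        refine setLIntegral_mono (measurable_lorentzMeasure_distribFn_mul _ q _) fun t ht => ?_
        rw [distribFn_finset_sum hdisj J (le_of_lt ht), ← Finset.sum_mul, ← mul_assoc]
        gcongr
        exact le_lorentzMeasure_setOf_lt_sum (div_pos hq hp) J _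

lemma le_lorentzNorm_rpow_finset_sum_of_forall_le (hp : 0 < p) (hq : 0 < q)
    (hdisj : Pairwise (Disjoint on fun j => support (v j)))
    (hv : ∀ j, BddAbove (range fun i => |v j i|)) {β : ℝ≥0∞}
    (hβ : ∀ j, β ≤ lorentzNorm p q (v j)) (J : Finset ι) :
    ENNReal.ofReal (min 1 (q / p)) * β ^ q * (J.card : ℝ≥0∞) ^ min 1 (q / p) ≤
      lorentzNorm p q (fun i => ∑ j ∈ J, v j i) ^ q := by
  set s := min 1 (q / p)
  have hs : 0 < s := lt_min one_pos (div_pos hq hp)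
  refine le_trans ?_ (le_lorentzNorm_rpow_finset_sum hp hq hdisj hv J)
  rcases J.eq_empty_or_nonempty with rfl | hJ
  · simp [ENNReal.zero_rpow_of_pos hs]
  have hk : (J.card : ℝ≥0∞) ≠ 0 := by simpa using hJ.ne_empty
  have hpow : (J.card : ℝ≥0∞) ^ (s - 1) * J.card = (J.card : ℝ≥0∞) ^ s := by
    conv_rhs => rw [← sub_add_cancel s 1, ENNReal.rpow_add _ _ hk (ENNReal.natCast_ne_top _),
      ENNReal.rpow_one]
  calc ENNReal.ofReal s * β ^ q * (J.card : ℝ≥0∞) ^ s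
      = ENNReal.ofReal s * (J.card : ℝ≥0∞) ^ (s - 1) * ∑ _j ∈ J, β ^ q := by
        rw [Finset.sum_const, nsmul_eq_mul, ← hpow]
        ring
    _ ≤ _ := by
        gcongr with j
        exact hβ j

end DisjointSupports

lemma ENNReal.tendsto_const_mul_natCast_rpow {c : ℝ≥0∞} (hc : c ≠ 0) {s : ℝ} (hs : 0 < s) :
    Tendsto (fun k : ℕ => c * (k : ℝ≥0∞) ^ s) atTop (𝓝 ⊤) := by
  have := ((ENNReal.continuous_rpow_const (y := s)).tendsto ⊤).comp ENNReal.tendsto_nat_nhds_top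
  rw [ENNReal.top_rpow_of_pos hs] at this
  simpa only [ENNReal.mul_top hc, Function.comp_def] using
    ENNReal.Tendsto.const_mul (a := c) this (Or.inl ENNReal.top_ne_zero)

lemma ENNReal.tendsto_nhds_top_of_rpow {α : Type*} {l : Filter α} {f : α → ℝ≥0∞} {q : ℝ}
    (hq : 0 < q) (hf : Tendsto (fun x => f x ^ q) l (𝓝 ⊤)) : Tendsto f l (𝓝 ⊤) := by
  have := (ENNReal.continuous_rpow_const (y := q⁻¹)).tendsto ⊤ |>.comp hf
  simpa [Function.comp_def, ENNReal.rpow_rpow_inv hq.ne', ENNReal.top_rpow_of_pos (inv_pos.2 hq)]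
    using this

theorem lorentzNorm_sum_tendsto_top_general (p q : ℝ) (hp : 0 < p) (hq : 0 < q)
    (α : ℝ) (hα : 0 < α) (v : ℕ → (ℕ → ℝ))
    (hdisj : ∀ j k, j ≠ k → ∀ i, v j i = 0 ∨ v k i = 0)
    (hbelow : ∀ j, ENNReal.ofReal α ≤ lorentzNorm p q (v j)) :
    Filter.Tendsto (fun k : ℕ => lorentzNorm p q (fun i => ∑ j ∈ Finset.range k, v j i))
      Filter.atTop (nhds ⊤) := by
  have hsupp : Pairwise (Disjoint on fun j => support (v j)) := fun j k hjk =>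
    Set.disjoint_left.2 fun i hj hk => (hdisj j k hjk i).elim hj hk
  have hα' : ENNReal.ofReal α ≠ 0 := by simpa using hα
  have hbdd : ∀ j, BddAbove (range fun i => |v j i|) := fun j =>
    bddAbove_of_lorentzNorm_ne_zero hq (ne_bot_of_le_ne_bot hα' (hbelow j))
  have hc : ENNReal.ofReal (min 1 (q / p)) * ENNReal.ofReal α ^ q ≠ 0 :=
    mul_ne_zero (by simpa using div_pos hq hp) (ENNReal.rpow_pos (pos_iff_ne_zero.2 hα')
      ENNReal.ofReal_ne_top).ne'
  refine ENNReal.tendsto_nhds_top_of_rpow hq <| tendsto_nhds_top_mono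
    (ENNReal.tendsto_const_mul_natCast_rpow hc (lt_min one_pos (div_pos hq hp)))
    (Eventually.of_forall fun k => ?_)
  simpa only [Finset.card_range] using
    le_lorentzNorm_rpow_finset_sum_of_forall_le hp hq hsupp hbdd hbelow (Finset.range k)

/-- If `v j ∈ ℓ_{p,q}` have pairwise disjoint supports and `‖v j‖_{p,q} ≥ α > 0`,
then `‖∑_{j<k} v j‖_{p,q} → ∞`. -/
theorem lorentzNorm_sum_tendsto_top (p q : ℝ) (hp : 0 < p) (hq : 0 < q)
    (α : ℝ) (hα : 0 < α) (v : ℕ → (ℕ → ℝ))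
    (hmem : ∀ j, lorentzNorm p q (v j) ≠ ⊤)
    (hdisj : ∀ j k, j ≠ k → ∀ i, v j i = 0 ∨ v k i = 0)
    (hbelow : ∀ j, ENNReal.ofReal α ≤ lorentzNorm p q (v j)) :
    Filter.Tendsto (fun k : ℕ => lorentzNorm p q (fun i => ∑ j ∈ Finset.range k, v j i))
      Filter.atTop (nhds ⊤) :=
  lorentzNorm_sum_tendsto_top_general p q hp hq α hα v hdisj hbelow
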